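/- Let c = gcd(n,k) and l = n/c with l odd. Then the set S consisting of {v_{j+ik} : 0 ≤ i ≤ l−1, 0 ≤ j ≤ c−1, i odd} together with {u_{c−1}} ∪ {u_j : 0 ≤ j ≤ c−1, j even} is a P3-hull set of G(n,k) of cardinality ⌈(n+1)/2⌉. -/

import Mathlib

/-!
Write every index as `j + i * k` with `i < l`, `j < c`, so that the inner vertices form the `c`
cycles `v_j, v_{j+k}, …, v_{j+(l-1)k}` and `S` holds the vertices with odd `i` on each of them.
From `S` the outer vertices `u_j` (`j < c`) and the inner vertices with even `0 < i < l - 1` get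
infected; then `v_j` (from `u_j` and `v_{j+k}`) and `v_{j+(l-1)k}` (from `v_{j+(l-2)k}` and
`v_j`, as `l - 2` is odd). Once every inner vertex is infected, the outer cycle fills up along
`u_0, u_1, …` through the spokes. The count is `c (l - 1) / 2 + ⌊c / 2⌋ + 1 = ⌊n / 2⌋ + 1`.
-/

open SimpleGraph
open Fin.NatCast

def infectStep {V : Type*} (G : SimpleGraph V) (S : Set V) : Set V :=
  S ∪ {v | ∃ a b, a ≠ b ∧ a ∈ S ∧ b ∈ S ∧ G.Adj v a ∧ G.Adj v b}

def infectIter {V : Type*} (G : SimpleGraph V) (S : Set V) : ℕ → Set V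
  | 0 => S
  | p + 1 => infectStep G (infectIter G S p)

def IsHullSet {V : Type*} (G : SimpleGraph V) (S : Set V) : Prop :=
  ∃ p, infectIter G S p = Set.univ

noncomputable def hullNumber {V : Type*} (G : SimpleGraph V) : ℕ :=
  sInf {m | ∃ S : Set V, S.ncard = m ∧ IsHullSet G S}

noncomputable def infectTime {V : Type*} (G : SimpleGraph V) (S : Set V) : ℕ :=
  sInf {p | infectIter G S p = Set.univ}

def IsCubic {V : Type*} (G : SimpleGraph V) : Prop :=
  ∀ v, {w | G.Adj v w}.ncard = 3

def IsDecyclingSet {V : Type*} (G : SimpleGraph V) (S : Set V) : Prop :=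
  (G.induce Sᶜ).IsAcyclic

noncomputable def decyclingNumber {V : Type*} (G : SimpleGraph V) : ℕ :=
  sInf {m | ∃ S : Set V, S.ncard = m ∧ IsDecyclingSet G S}

def pHull {V : Type*} (G : SimpleGraph V) (S : Set V) : Set V :=
  ⋃ p, infectIter G S p

noncomputable def graphDiam {V : Type*} (G : SimpleGraph V) : ℕ :=
  sSup {d | ∃ a b, d = G.dist a b}

noncomputable def maxCompDiam {V : Type*} (G : SimpleGraph V) : ℕ :=
  sSup {d | ∃ c : G.ConnectedComponent, d = graphDiam (G.induce c.supp)}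

def genPetersen (n k : ℕ) [NeZero n] : SimpleGraph (Fin n ⊕ Fin n) :=
  SimpleGraph.fromRel fun x y =>
    match x, y with
    | Sum.inl i, Sum.inl j => j = i + 1
    | Sum.inl i, Sum.inr j => i = j
    | Sum.inr i, Sum.inr j => j = i + (k : Fin n)
    | _, _ => False

def Sv (n k : ℕ) [NeZero n] : Set (Fin n ⊕ Fin n) :=
  {x | ∃ i j : ℕ, i < n / Nat.gcd n k ∧ j < Nat.gcd n k ∧ Odd i ∧
    x = Sum.inr ((j + i * k : ℕ) : Fin n)}

def SuOdd (n c : ℕ) [NeZero n] : Set (Fin n ⊕ Fin n) :=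
  {Sum.inl ((c - 1 : ℕ) : Fin n)} ∪
    {x | ∃ j : ℕ, j < c ∧ Even j ∧ x = Sum.inl ((j : ℕ) : Fin n)}

section Infection
variable {V : Type*} {G : SimpleGraph V} {S : Set V}

lemma infectIter_mono : Monotone (infectIter G S) :=
  monotone_nat_of_le_succ fun _ => Set.subset_union_left

lemma subset_pHull : S ⊆ pHull G S :=
  Set.subset_iUnion (infectIter G S) 0

lemma mem_pHull_of_adj {v a b : V} (hab : a ≠ b) (ha : a ∈ pHull G S) (hb : b ∈ pHull G S)
    (hva : G.Adj v a) (hvb : G.Adj v b) : v ∈ pHull G S := by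
  obtain ⟨p, hp⟩ := Set.mem_iUnion.mp ha
  obtain ⟨q, hq⟩ := Set.mem_iUnion.mp hb
  refine Set.mem_iUnion.mpr ⟨max p q + 1, Or.inr ⟨a, b, hab, ?_, ?_, hva, hvb⟩⟩
  · exact infectIter_mono (le_max_left p q) hp
  · exact infectIter_mono (le_max_right p q) hq

lemma isHullSet_of_pHull_eq_univ [Finite V] (h : pHull G S = Set.univ) : IsHullSet G S := by
  have := Fintype.ofFinite V
  choose p hp using fun v => Set.mem_iUnion.mp (h.symm ▸ Set.mem_univ v : v ∈ pHull G S)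
  exact ⟨Finset.univ.sup p, Set.eq_univ_of_forall fun v =>
    infectIter_mono (Finset.le_sup (Finset.mem_univ v)) (hp v)⟩

end Infection

lemma Fin.natCast_ne_natCast_of_lt {n a b : ℕ} [NeZero n] (ha : a < n) (hb : b < n)
    (h : a ≠ b) : (a : Fin n) ≠ b := by
  rwa [Ne, Fin.ext_iff, Fin.val_cast_of_lt ha, Fin.val_cast_of_lt hb]

section Coordinates
variable {n k : ℕ}

local notation "c" => Nat.gcd n k
local notation "l" => n / Nat.gcd n k

lemma gcd_mul_div_gcd : c * l = n := Nat.mul_div_cancel' (Nat.gcd_dvd_left n k)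

lemma div_gcd_mul_eq_mul_div_gcd : l * k = n * (k / c) := by
  rw [Nat.div_mul_right_comm (Nat.gcd_dvd_left n k), Nat.mul_div_assoc _ (Nat.gcd_dvd_right n k)]

lemma eq_of_natCast_add_mul_eq [NeZero n] {i i' j j' : ℕ} (hi : i < l) (hi' : i' < l)
    (hj : j < c) (hj' : j' < c) (h : ((j + i * k : ℕ) : Fin n) = ((j' + i' * k : ℕ) : Fin n)) :
    i = i' ∧ j = j' := by
  have hmod : j + i * k ≡ j' + i' * k [MOD n] := by
    simpa only [Nat.ModEq, Fin.val_natCast] using congrArg Fin.val h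
  have hjj : j = j' := by
    have hk (a m : ℕ) : a + m * k ≡ a [MOD c] := by
      simpa using
        (Nat.modEq_zero_iff_dvd.mpr (dvd_mul_of_dvd_right (Nat.gcd_dvd_right n k) m)).add_left a
    have hc : j + i * k ≡ j' + i' * k [MOD c] := hmod.of_dvd (Nat.gcd_dvd_left n k)
    exact ((hk j i).symm.trans (hc.trans (hk j' i'))).eq_of_lt_of_lt hj hj'
  subst hjj
  have := (Nat.ModEq.add_left_cancel' j hmod).cancel_right_div_gcd (Nat.pos_of_neZero n)
  exact ⟨Nat.ModEq.eq_of_lt_of_lt this hi hi', rfl⟩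

lemma exists_eq_natCast_add_mul [NeZero n] (m : Fin n) :
    ∃ i < l, ∃ j < c, m = ((j + i * k : ℕ) : Fin n) := by
  let e : ℕ × ℕ → Fin n := fun p => ((p.2 + p.1 * k : ℕ) : Fin n)
  have hinj : Set.InjOn e (Finset.range l ×ˢ Finset.range c : Finset (ℕ × ℕ)) := by
    rintro ⟨i, j⟩ hij ⟨i', j'⟩ hij' h
    simp only [Finset.coe_product, Finset.coe_range, Set.mem_prod, Set.mem_Iio] at hij hij'
    obtain ⟨rfl, rfl⟩ := eq_of_natCast_add_mul_eq hij.1 hij'.1 hij.2 hij'.2 h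
    rfl
  have himage : (Finset.range l ×ˢ Finset.range c).image e = Finset.univ := by
    refine Finset.eq_univ_of_card _ ?_
    rw [Finset.card_image_of_injOn hinj, Finset.card_product, Finset.card_range,
      Finset.card_range, Fintype.card_fin, mul_comm, gcd_mul_div_gcd]
  obtain ⟨⟨i, j⟩, hij, rfl⟩ := Finset.mem_image.mp (himage ▸ Finset.mem_univ m)
  simp only [Finset.mem_product, Finset.mem_range] at hij
  exact ⟨i, hij.1, j, hij.2, rfl⟩

lemma three_le_div_gcd (hk1 : 1 ≤ k) (hk2 : k < n) (hl : Odd l) : 3 ≤ l := by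
  have hc : c ≤ k := Nat.gcd_le_right n hk1
  have hn : c * l = n := gcd_mul_div_gcd
  obtain ⟨t, ht⟩ := hl
  by_contra h
  rw [show l = 1 by omega, mul_one] at hn
  omega

end Coordinates

section GenPetersen
variable {n k : ℕ} [NeZero n]

local notation "c" => Nat.gcd n k
local notation "l" => n / Nat.gcd n k

def innerVertex (n k : ℕ) [NeZero n] (i j : ℕ) : Fin n ⊕ Fin n :=
  Sum.inr ((j + i * k : ℕ) : Fin n)

lemma genPetersen_adj_inl_inr (a : Fin n) : (genPetersen n k).Adj (Sum.inl a) (Sum.inr a) := by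
  simp [genPetersen]

lemma genPetersen_adj_inl_succ {a : ℕ} (ha : a + 1 < n) :
    (genPetersen n k).Adj (Sum.inl (a : Fin n)) (Sum.inl ((a + 1 : ℕ) : Fin n)) := by
  have hne := Fin.natCast_ne_natCast_of_lt (by omega) ha (Nat.succ_ne_self a).symm
  exact (SimpleGraph.fromRel_adj _ _ _).mpr ⟨Sum.inl_injective.ne hne, Or.inl (Nat.cast_succ a)⟩

lemma innerVertex_ne {i i' j : ℕ} (hi : i < l) (hi' : i' < l) (hj : j < c) (h : i ≠ i') :
    innerVertex n k i j ≠ innerVertex n k i' j :=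
  fun he => h (eq_of_natCast_add_mul_eq hi hi' hj hj (Sum.inr.inj he)).1

lemma genPetersen_adj_innerVertex_of_add {i i' j : ℕ} (hi : i < l) (hi' : i' < l) (hj : j < c)
    (h : i' = i + 1) : (genPetersen n k).Adj (innerVertex n k i j) (innerVertex n k i' j) := by
  refine (SimpleGraph.fromRel_adj _ _ _).mpr ⟨innerVertex_ne hi hi' hj (by omega), Or.inl ?_⟩
  show ((j + i' * k : ℕ) : Fin n) = ((j + i * k : ℕ) : Fin n) + (k : Fin n)
  rw [h, add_one_mul, ← add_assoc, Nat.cast_add]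

lemma genPetersen_adj_innerVertex_last (hl : 2 ≤ l) {j : ℕ} (hj : j < c) :
    (genPetersen n k).Adj (innerVertex n k (l - 1) j) (innerVertex n k 0 j) := by
  refine (SimpleGraph.fromRel_adj _ _ _).mpr ⟨innerVertex_ne (by omega) (by omega) hj (by omega),
    Or.inl ?_⟩
  have hwrap : j + (l - 1) * k + k = j + n * (k / c) := by
    rw [← div_gcd_mul_eq_mul_div_gcd, add_assoc, ← Nat.succ_mul, Nat.succ_eq_add_one,
      Nat.sub_add_cancel (by omega)]
  show ((j + 0 * k : ℕ) : Fin n) = ((j + (l - 1) * k : ℕ) : Fin n) + (k : Fin n)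
  rw [← Nat.cast_add, hwrap]
  simp
end GenPetersen

section Hull
variable {n k : ℕ} [NeZero n]

local notation "c" => Nat.gcd n k
local notation "l" => n / Nat.gcd n k
local notation "H" => pHull (genPetersen n k) (Sv n k ∪ SuOdd n (Nat.gcd n k))

lemma innerVertex_mem_Sv {i j : ℕ} (hi : i < l) (hj : j < c) (hodd : Odd i) :
    innerVertex n k i j ∈ Sv n k :=
  ⟨i, j, hi, hj, hodd, rfl⟩

lemma inl_mem_pHull_of_lt_gcd {j : ℕ} (hj : j < c) : Sum.inl (j : Fin n) ∈ H := by
  have hcn : c ≤ n := Nat.gcd_le_left k (Nat.pos_of_neZero n)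
  have hSu {j' : ℕ} (hj' : j' < c) (he : Even j') : Sum.inl (j' : Fin n) ∈ H :=
    subset_pHull (Or.inr (Or.inr ⟨j', hj', he, rfl⟩))
  rcases Nat.even_or_odd j with he | ho
  · exact hSu hj he
  by_cases hlast : j = c - 1
  · exact subset_pHull (Or.inr (Or.inl (by rw [hlast]; rfl)))
  obtain ⟨j, rfl⟩ : ∃ j', j = j' + 1 := ⟨j - 1, by have := ho.pos; omega⟩
  have he : Even j := Nat.not_odd_iff_even.mp (Nat.odd_add_one.mp ho)
  exact mem_pHull_of_adj (a := Sum.inl (j : Fin n)) (b := Sum.inl ((j + 2 : ℕ) : Fin n))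
    (Sum.inl_injective.ne (Fin.natCast_ne_natCast_of_lt (by omega) (by omega) (by omega)))
    (hSu (by omega) he) (hSu (by omega) (he.add even_two))
    (genPetersen_adj_inl_succ (by omega)).symm (genPetersen_adj_inl_succ (a := j + 1) (by omega))

lemma innerVertex_mem_pHull_of_even {i j : ℕ} (hi0 : 0 < i) (hil : i + 1 < l) (hj : j < c)
    (he : Even i) : innerVertex n k i j ∈ H := by
  obtain ⟨i, rfl⟩ : ∃ i', i = i' + 1 := ⟨i - 1, by omega⟩
  have hodd : Odd i := Nat.not_even_iff_odd.mp (Nat.even_add_one.mp he)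
  refine mem_pHull_of_adj (innerVertex_ne (by omega) hil hj (by omega))
    (subset_pHull (Or.inl (innerVertex_mem_Sv (by omega) hj hodd)))
    (subset_pHull (Or.inl (innerVertex_mem_Sv hil hj he.add_one)))
    (genPetersen_adj_innerVertex_of_add (by omega) (by omega) hj rfl).symm
    (genPetersen_adj_innerVertex_of_add (by omega) hil hj rfl)

lemma innerVertex_zero_mem_pHull (hl : 2 ≤ l) {j : ℕ} (hj : j < c) :
    innerVertex n k 0 j ∈ H := by
  refine mem_pHull_of_adj (a := Sum.inl (j : Fin n)) Sum.inl_ne_inr (inl_mem_pHull_of_lt_gcd hj)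
    (subset_pHull (Or.inl (innerVertex_mem_Sv (by omega) hj odd_one)))
    ?_ (genPetersen_adj_innerVertex_of_add (by omega) (by omega) hj rfl)
  simpa [innerVertex] using (genPetersen_adj_inl_inr (k := k) (j : Fin n)).symm

lemma innerVertex_last_mem_pHull (hl3 : 3 ≤ l) (hl : Odd l) {j : ℕ} (hj : j < c) :
    innerVertex n k (l - 1) j ∈ H := by
  refine mem_pHull_of_adj (innerVertex_ne (by omega) (by omega) hj (by omega))
    (subset_pHull (Or.inl (innerVertex_mem_Sv (i := l - 2) (by omega) hj ?_)))
    (innerVertex_zero_mem_pHull (by omega) hj)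
    (genPetersen_adj_innerVertex_of_add (by omega) (by omega) hj (by omega)).symm
    (genPetersen_adj_innerVertex_last (by omega) hj)
  exact Nat.Odd.sub_even (by omega) hl even_two

lemma inr_mem_pHull (hl3 : 3 ≤ l) (hl : Odd l) (m : Fin n) : Sum.inr m ∈ H := by
  obtain ⟨i, hi, j, hj, rfl⟩ := exists_eq_natCast_add_mul (k := k) m
  change innerVertex n k i j ∈ H
  rcases Nat.even_or_odd i with he | ho
  · rcases Nat.eq_zero_or_pos i with rfl | hi0
    · exact innerVertex_zero_mem_pHull (by omega) hj
    by_cases hil : i = l - 1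
    · exact hil ▸ innerVertex_last_mem_pHull hl3 hl hj
    exact innerVertex_mem_pHull_of_even hi0 (by omega) hj he
  · exact subset_pHull (Or.inl (innerVertex_mem_Sv hi hj ho))

lemma inl_mem_pHull (hl3 : 3 ≤ l) (hl : Odd l) {m : ℕ} (hm : m < n) :
    Sum.inl (m : Fin n) ∈ H := by
  induction m with
  | zero => exact inl_mem_pHull_of_lt_gcd (Nat.gcd_pos_of_pos_left k (Nat.pos_of_neZero n))
  | succ m ih =>
    exact mem_pHull_of_adj Sum.inl_ne_inr (ih (by omega)) (inr_mem_pHull hl3 hl _)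
      (genPetersen_adj_inl_succ hm).symm (genPetersen_adj_inl_inr _)

lemma pHull_eq_univ (hl3 : 3 ≤ l) (hl : Odd l) : H = Set.univ := by
  refine Set.eq_univ_of_forall ?_
  rintro (m | m)
  · simpa using inl_mem_pHull hl3 hl m.isLt
  · exact inr_mem_pHull hl3 hl m

end Hull

section Card

lemma Nat.ncard_odd_lt (m : ℕ) : {i | i < m ∧ Odd i}.ncard = m / 2 := by
  have : {i | i < m ∧ Odd i} = ↑((Finset.range m).filter (fun e => 2 ∣ e + 1)) := by
    ext i
    simp [← even_iff_two_dvd, Nat.even_add_one]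
  rw [this, Set.ncard_coe_finset, Nat.card_multiples]

lemma Nat.ncard_even_lt (m : ℕ) : {i | i < m ∧ Even i}.ncard = (m + 1) / 2 := by
  have hunion : {i | i < m ∧ Even i} ∪ {i | i < m ∧ Odd i} = Set.Iio m := by
    ext i
    simp [← and_or_left, Nat.even_or_odd]
  have hdisj : Disjoint {i | i < m ∧ Even i} {i | i < m ∧ Odd i} :=
    Set.disjoint_left.mpr fun i hi hi' => Nat.not_odd_iff_even.mpr hi.2 hi'.2
  have := Set.ncard_union_eq hdisj ((Set.finite_Iio m).subset fun _ hi => hi.1)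
    ((Set.finite_Iio m).subset fun _ hi => hi.1)
  rw [hunion, Nat.ncard_odd_lt, ← Finset.coe_range, Set.ncard_coe_finset, Finset.card_range]
    at this
  omega

lemma ncard_insert_pred_even_lt {c : ℕ} (hc : 0 < c) :
    (insert (c - 1) {j | j < c ∧ Even j}).ncard = c / 2 + 1 := by
  rcases Nat.even_or_odd c with he | ho
  · have hodd : ¬Even (c - 1) := by
      rw [Nat.not_even_iff_odd]; exact Nat.Even.sub_odd hc he odd_one
    rw [Set.ncard_insert_of_notMem (fun h => hodd h.2)
      ((Set.finite_Iio c).subset fun _ hj => hj.1), Nat.ncard_even_lt]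
    obtain ⟨t, rfl⟩ := he
    omega
  · have hmem : c - 1 ∈ {j | j < c ∧ Even j} := ⟨by omega, Nat.Odd.sub_odd ho odd_one⟩
    rw [Set.insert_eq_of_mem hmem, Nat.ncard_even_lt]
    obtain ⟨t, rfl⟩ := ho
    omega

lemma SuOdd_eq_image (n c : ℕ) [NeZero n] :
    SuOdd n c = (fun j : ℕ => Sum.inl (j : Fin n)) '' insert (c - 1) {j | j < c ∧ Even j} := by
  ext x
  simp only [SuOdd, Set.mem_union, Set.mem_singleton_iff, Set.mem_ofPred_eq, Set.image_insert_eq,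
    Set.mem_insert_iff, Set.mem_image]
  grind

lemma ncard_SuOdd {n c : ℕ} [NeZero n] (hc : 0 < c) (hcn : c ≤ n) :
    (SuOdd n c).ncard = c / 2 + 1 := by
  rw [SuOdd_eq_image, Set.InjOn.ncard_image, ncard_insert_pred_even_lt hc]
  intro a ha b hb h
  by_contra hab
  have hlt {j : ℕ} (hj : j ∈ insert (c - 1) {j | j < c ∧ Even j}) : j < n := by
    rcases hj with rfl | hj
    · omega
    · exact hj.1.trans_le hcn
  exact Fin.natCast_ne_natCast_of_lt (hlt ha) (hlt hb) hab (Sum.inl.inj h)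

variable {n k : ℕ} [NeZero n]

local notation "c" => Nat.gcd n k
local notation "l" => n / Nat.gcd n k

lemma Sv_eq_image : Sv n k =
    (fun p : ℕ × ℕ => innerVertex n k p.1 p.2) '' ({i | i < l ∧ Odd i} ×ˢ Set.Iio c) := by
  ext x
  simp only [Sv, innerVertex, Set.mem_ofPred_eq, Set.mem_image, Set.mem_prod, Set.mem_Iio,
    Prod.exists]
  grind

lemma ncard_Sv : (Sv n k).ncard = l / 2 * c := by
  rw [Sv_eq_image, Set.InjOn.ncard_image, Set.ncard_prod, Nat.ncard_odd_lt, ← Finset.coe_range,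
    Set.ncard_coe_finset, Finset.card_range]
  rintro ⟨i, j⟩ ⟨hi, hj⟩ ⟨i', j'⟩ ⟨hi', hj'⟩ h
  obtain ⟨rfl, rfl⟩ := eq_of_natCast_add_mul_eq hi.1 hi'.1 hj hj' (Sum.inr.inj h)
  rfl

lemma disjoint_Sv_SuOdd (m : ℕ) : Disjoint (Sv n k) (SuOdd n m) := by
  rw [Sv_eq_image, SuOdd_eq_image]
  exact Set.disjoint_left.mpr fun _ ⟨_, _, hx⟩ ⟨_, _, hx'⟩ =>
    Sum.inr_ne_inl (hx.trans hx'.symm)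

end Card

theorem stmt7 (n k : ℕ) [NeZero n] (hk1 : 1 ≤ k) (hk2 : 2 * k < n)
    (hl : Odd (n / Nat.gcd n k)) :
    IsHullSet (genPetersen n k) (Sv n k ∪ SuOdd n (Nat.gcd n k)) ∧
    (Sv n k ∪ SuOdd n (Nat.gcd n k)).ncard = (n + 2) / 2 := by
  have hl3 : 3 ≤ n / Nat.gcd n k := three_le_div_gcd hk1 (by omega) hl
  refine ⟨isHullSet_of_pHull_eq_univ (pHull_eq_univ hl3 hl), ?_⟩
  rw [Set.ncard_union_eq (disjoint_Sv_SuOdd _) (Set.toFinite _) (Set.toFinite _), ncard_Sv,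
    ncard_SuOdd (Nat.gcd_pos_of_pos_left k (Nat.pos_of_neZero n))
      (Nat.gcd_le_left k (Nat.pos_of_neZero n))]
  obtain ⟨t, ht⟩ := hl
  have hn : n = 2 * (t * Nat.gcd n k) + Nat.gcd n k :=
    calc n = Nat.gcd n k * (n / Nat.gcd n k) := gcd_mul_div_gcd.symm
      _ = 2 * (t * Nat.gcd n k) + Nat.gcd n k := by rw [ht]; ring
  rw [ht, show (2 * t + 1) / 2 = t by omega]
  omega
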